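/- arXiv:1101.3081 — 2 statements merged into one kernel-verified Lean document; each statement's English description precedes it below -/
import Mathlib

section
/- For every intuitionistic fuzzy ideal B of the left operator semigroup L, (B^+)^{+′} = B. -/
/-- An intuitionistic fuzzy ideal of a semigroup. -/
def IFIdealSG {L : Type*} [Mul L] (μ ν : L → ℝ) : Prop :=
  (∀ u, 0 ≤ μ u) ∧ (∀ u, 0 ≤ ν u) ∧ (∀ u, μ u + ν u ≤ 1) ∧
  (∀ u v : L, max (μ u) (μ v) ≤ μ (u * v)) ∧
  (∀ u v : L, ν (u * v) ≤ min (ν u) (ν v))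

/-- For every intuitionistic fuzzy ideal B of the left operator semigroup L
of a Γ-semigroup S with unities, (B^+)^{+′} = B; i.e. for all [a,α] ∈ L,
inf_s inf_γ μ_B([aαs,γ]) = μ_B([a,α]) and sup_s sup_γ ν_B([aαs,γ]) = ν_B([a,α]). -/
theorem stmt_7 (S Γ : Type*) [Nonempty S] [Nonempty Γ]
    (m : S → Γ → S → S) (g : Γ → S → Γ → Γ)
    (hm : ∀ (a : S) (α : Γ) (b : S) (β : Γ) (c : S), m (m a α b) β c = m a α (m b β c))
    (hmg : ∀ (a : S) (α : Γ) (b : S) (β : Γ) (c : S), m a (g α b β) c = m (m a α b) β c)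
    (hgm : ∀ (α : Γ) (a : S) (β : Γ) (b : S) (γ : Γ), g α (m a β b) γ = g (g α a β) b γ)
    (hgg : ∀ (α : Γ) (a : S) (β : Γ) (b : S) (γ : Γ), g α a (g β b γ) = g (g α a β) b γ)
    -- left unity [e,δ] and right unity [γ₀,f]
    (e : S) (δ : Γ) (hlu : ∀ s, m e δ s = s) (hluΓ : ∀ γ, g γ e δ = γ)
    (γ₀ : Γ) (f : S) (hru : ∀ s, m s γ₀ f = s) (hruΓ : ∀ α, g γ₀ f α = α)
    -- the left operator semigroup L
    (L : Type*) [Mul L] (mkl : S → Γ → L)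
    (hsurj : ∀ u : L, ∃ (x : S) (α : Γ), u = mkl x α)
    (hmkeq : ∀ (x : S) (α : Γ) (y : S) (β : Γ), mkl x α = mkl y β ↔
      ((∀ s : S, m x α s = m y β s) ∧ (∀ γ : Γ, g γ x α = g γ y β)))
    (hmul : ∀ (x : S) (α : Γ) (y : S) (β : Γ), mkl x α * mkl y β = mkl (m x α y) β)
    (μ ν : L → ℝ) (hB : IFIdealSG μ ν) :
    ∀ (a : S) (α : Γ),
      (⨅ s : S, ⨅ γ : Γ, μ (mkl (m a α s) γ)) = μ (mkl a α) ∧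
      (⨆ s : S, ⨆ γ : Γ, ν (mkl (m a α s) γ)) = ν (mkl a α) := by
  
  intro a α
  obtain ⟨hμ0, hν0, hsum, hμmul, hνmul⟩ := hB
  have hkey : mkl (m a α e) δ = mkl a α := by
    rw [hmkeq]
    constructor
    · intro t; rw [hm, hlu]
    · intro γ; rw [hgm, hluΓ]
  have hle : ∀ (s : S) (γ : Γ), μ (mkl a α) ≤ μ (mkl (m a α s) γ) := by
    intro s γ
    have := hμmul (mkl a α) (mkl s γ)
    rw [hmul] at this
    exact le_trans (le_max_left _ _) this
  have hge : ∀ (s : S) (γ : Γ), ν (mkl (m a α s) γ) ≤ ν (mkl a α) := by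
    intro s γ
    have := hνmul (mkl a α) (mkl s γ)
    rw [hmul] at this
    exact le_trans this (min_le_left _ _)
  constructor
  · apply le_antisymm
    · have hb : ∀ s : S, BddBelow (Set.range fun γ : Γ => μ (mkl (m a α s) γ)) :=
        fun s => ⟨0, by rintro x ⟨γ, rfl⟩; exact hμ0 _⟩
      have h1 : BddBelow (Set.range fun s : S => ⨅ γ : Γ, μ (mkl (m a α s) γ)) :=
        ⟨0, by rintro x ⟨s, rfl⟩; exact le_ciInf fun γ => hμ0 _⟩
      refine le_trans (ciInf_le h1 e) ?_
      refine le_trans (ciInf_le (hb e) δ) ?_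
      rw [hkey]
    · exact le_ciInf fun s => le_ciInf fun γ => hle s γ
  · apply le_antisymm
    · exact ciSup_le fun s => ciSup_le fun γ => hge s γ
    · have hb : ∀ s : S, BddAbove (Set.range fun γ : Γ => ν (mkl (m a α s) γ)) :=
        fun s => ⟨ν (mkl a α), by rintro x ⟨γ, rfl⟩; exact hge s γ⟩
      have h1 : BddAbove (Set.range fun s : S => ⨆ γ : Γ, ν (mkl (m a α s) γ)) :=
        ⟨ν (mkl a α), by rintro x ⟨s, rfl⟩; exact ciSup_le fun γ => hge s γ⟩
      refine le_trans ?_ (le_ciSup h1 e)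
      refine le_trans ?_ (le_ciSup (hb e) δ)
      rw [hkey]
end

section
/- The map A ↦ A^{+′} is an inclusion preserving bijection between the set of all intuitionistic fuzzy ideals of S and the set of all intuitionistic fuzzy ideals of the left operator semigroup L, with inverse B ↦ B^+. -/
/-- An intuitionistic fuzzy ideal of a Γ-semigroup with multiplication `m`. -/
def IFIdealGamma {S Γ : Type*} (m : S → Γ → S → S) (μ ν : S → ℝ) : Prop :=
  (∀ x, 0 ≤ μ x) ∧ (∀ x, 0 ≤ ν x) ∧ (∀ x, μ x + ν x ≤ 1) ∧
  (∀ (x : S) (γ : Γ) (y : S), max (μ x) (μ y) ≤ μ (m x γ y)) ∧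
  (∀ (x : S) (γ : Γ) (y : S), ν (m x γ y) ≤ min (ν x) (ν y))

lemma bddB' {ι : Type*} (f : ι → ℝ) (h : ∀ i, 0 ≤ f i) : BddBelow (Set.range f) :=
  ⟨0, by rintro _ ⟨i, rfl⟩; exact h i⟩

lemma bddA' {ι : Type*} (f : ι → ℝ) (h : ∀ i, f i ≤ 1) : BddAbove (Set.range f) :=
  ⟨1, by rintro _ ⟨i, rfl⟩; exact h i⟩

/-- The map A ↦ A^{+′} is an inclusion preserving bijection between the set of
all intuitionistic fuzzy ideals of S (with unities) and the set of all intuitionistic fuzzy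
ideals of the left operator semigroup L, with inverse B ↦ B^+. -/
theorem stmt_8 (S Γ : Type*) [Nonempty S] [Nonempty Γ]
    (m : S → Γ → S → S) (g : Γ → S → Γ → Γ)
    (hm : ∀ (a : S) (α : Γ) (b : S) (β : Γ) (c : S), m (m a α b) β c = m a α (m b β c))
    (hmg : ∀ (a : S) (α : Γ) (b : S) (β : Γ) (c : S), m a (g α b β) c = m (m a α b) β c)
    (hgm : ∀ (α : Γ) (a : S) (β : Γ) (b : S) (γ : Γ), g α (m a β b) γ = g (g α a β) b γ)
    (hgg : ∀ (α : Γ) (a : S) (β : Γ) (b : S) (γ : Γ), g α a (g β b γ) = g (g α a β) b γ)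
    (e : S) (δ : Γ) (hlu : ∀ s, m e δ s = s) (hluΓ : ∀ γ, g γ e δ = γ)
    (γ₀ : Γ) (f : S) (hru : ∀ s, m s γ₀ f = s) (hruΓ : ∀ α, g γ₀ f α = α)
    (L : Type*) [Mul L] (mkl : S → Γ → L)
    (hsurj : ∀ u : L, ∃ (x : S) (α : Γ), u = mkl x α)
    (hmkeq : ∀ (x : S) (α : Γ) (y : S) (β : Γ), mkl x α = mkl y β ↔
      ((∀ s : S, m x α s = m y β s) ∧ (∀ γ : Γ, g γ x α = g γ y β)))
    (hmul : ∀ (x : S) (α : Γ) (y : S) (β : Γ), mkl x α * mkl y β = mkl (m x α y) β) :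
    -- (i) A ↦ A^{+′} maps IFI(S) into IFI(L), and (A^{+′})^+ = A
    (∀ μ ν : S → ℝ, IFIdealGamma m μ ν →
      ∀ μ' ν' : L → ℝ,
        (∀ (a : S) (α : Γ), μ' (mkl a α) = ⨅ s : S, μ (m a α s)) →
        (∀ (a : S) (α : Γ), ν' (mkl a α) = ⨆ s : S, ν (m a α s)) →
        IFIdealSG μ' ν' ∧
        (∀ a : S, (⨅ γ : Γ, μ' (mkl a γ)) = μ a) ∧
        (∀ a : S, (⨆ γ : Γ, ν' (mkl a γ)) = ν a)) ∧
    -- (ii) B ↦ B^+ maps IFI(L) into IFI(S), and (B^+)^{+′} = B (so the map is onto)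
    (∀ μ' ν' : L → ℝ, IFIdealSG μ' ν' →
      IFIdealGamma m (fun a => ⨅ γ : Γ, μ' (mkl a γ)) (fun a => ⨆ γ : Γ, ν' (mkl a γ)) ∧
      (∀ (a : S) (α : Γ), (⨅ s : S, ⨅ γ : Γ, μ' (mkl (m a α s) γ)) = μ' (mkl a α)) ∧
      (∀ (a : S) (α : Γ), (⨆ s : S, ⨆ γ : Γ, ν' (mkl (m a α s) γ)) = ν' (mkl a α))) ∧
    -- (iii) the map is inclusion preserving
    (∀ μ₁ ν₁ μ₂ ν₂ : S → ℝ, IFIdealGamma m μ₁ ν₁ → IFIdealGamma m μ₂ ν₂ →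
      (∀ x, μ₁ x ≤ μ₂ x) → (∀ x, ν₂ x ≤ ν₁ x) →
      (∀ (a : S) (α : Γ), (⨅ s : S, μ₁ (m a α s)) ≤ ⨅ s : S, μ₂ (m a α s)) ∧
      (∀ (a : S) (α : Γ), (⨆ s : S, ν₂ (m a α s)) ≤ ⨆ s : S, ν₁ (m a α s))) := by
  constructor
  · -- (i)
    intro μ ν hA μ' ν' hμ' hν'
    obtain ⟨hμ0, hν0, hsum, hmax, hmin⟩ := hA
    have hμ1 : ∀ x, μ x ≤ 1 := fun x => by linarith [hsum x, hν0 x]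
    have hν1 : ∀ x, ν x ≤ 1 := fun x => by linarith [hsum x, hμ0 x]
    have bμ : ∀ (a : S) (α : Γ), BddBelow (Set.range fun s => μ (m a α s)) :=
      fun a α => bddB' _ fun s => hμ0 _
    have bν : ∀ (a : S) (α : Γ), BddAbove (Set.range fun s => ν (m a α s)) :=
      fun a α => bddA' _ fun s => hν1 _
    have hμ'0 : ∀ u, 0 ≤ μ' u := by
      intro u; obtain ⟨a, α, rfl⟩ := hsurj u
      rw [hμ']; exact le_ciInf fun s => hμ0 _
    have hν'0 : ∀ u, 0 ≤ ν' u := by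
      intro u; obtain ⟨a, α, rfl⟩ := hsurj u
      rw [hν']
      exact le_trans (hν0 _) (le_ciSup (bν a α) (Classical.arbitrary S))
    refine ⟨⟨hμ'0, hν'0, ?_, ?_, ?_⟩, ?_, ?_⟩
    · intro u; obtain ⟨a, α, rfl⟩ := hsurj u
      rw [hμ', hν']
      have h1 : (⨆ s, ν (m a α s)) ≤ 1 - ⨅ s, μ (m a α s) := by
        apply ciSup_le
        intro s
        have h2 := ciInf_le (bμ a α) s
        have h3 := hsum (m a α s)
        linarith
      linarith
    · intro u v
      obtain ⟨a, α, rfl⟩ := hsurj u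
      obtain ⟨b, β, rfl⟩ := hsurj v
      rw [hmul, hμ', hμ', hμ']
      apply max_le
      · apply le_ciInf
        intro s
        rw [hm]
        exact ciInf_le (bμ a α) (m b β s)
      · apply le_ciInf
        intro s
        rw [hm]
        exact le_trans (ciInf_le (bμ b β) s)
          (le_trans (le_max_right (μ a) _) (hmax a α (m b β s)))
    · intro u v
      obtain ⟨a, α, rfl⟩ := hsurj u
      obtain ⟨b, β, rfl⟩ := hsurj v
      rw [hmul, hν', hν', hν']
      apply le_min
      · apply ciSup_le
        intro s
        rw [hm]
        exact le_ciSup (bν a α) (m b β s)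
      · apply ciSup_le
        intro s
        rw [hm]
        exact le_trans (le_trans (hmin a α (m b β s)) (min_le_right _ _))
          (le_ciSup (bν b β) s)
    · intro a
      apply le_antisymm
      · have b1 : BddBelow (Set.range fun γ : Γ => μ' (mkl a γ)) :=
          bddB' _ fun γ => hμ'0 _
        refine le_trans (ciInf_le b1 γ₀) ?_
        rw [hμ']
        refine le_trans (ciInf_le (bμ a γ₀) f) ?_
        rw [hru]
      · apply le_ciInf
        intro γ
        rw [hμ']
        exact le_ciInf fun s => le_trans (le_max_left _ (μ s)) (hmax a γ s)
    · intro a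
      apply le_antisymm
      · apply ciSup_le
        intro γ
        rw [hν']
        exact ciSup_le fun s => le_trans (hmin a γ s) (min_le_left _ _)
      · have b1 : BddAbove (Set.range fun γ : Γ => ν' (mkl a γ)) := by
          apply bddA'
          intro γ
          have := hμ'0 (mkl a γ)
          have h2 : μ' (mkl a γ) + ν' (mkl a γ) ≤ 1 := by
            rw [hμ', hν']
            have h1 : (⨆ s, ν (m a γ s)) ≤ 1 - ⨅ s, μ (m a γ s) := by
              apply ciSup_le
              intro s
              have h2 := ciInf_le (bμ a γ) s
              have h3 := hsum (m a γ s)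
              linarith
            linarith
          linarith
        refine le_trans ?_ (le_ciSup b1 γ₀)
        rw [hν']
        refine le_trans ?_ (le_ciSup (bν a γ₀) f)
        rw [hru]
  constructor
  · -- (ii)
    intro μ' ν' hB
    obtain ⟨hμ0, hν0, hsum, hmax, hmin⟩ := hB
    have hμ1 : ∀ u, μ' u ≤ 1 := fun u => by linarith [hsum u, hν0 u]
    have hν1 : ∀ u, ν' u ≤ 1 := fun u => by linarith [hsum u, hμ0 u]
    have bμ : ∀ a : S, BddBelow (Set.range fun γ : Γ => μ' (mkl a γ)) :=
      fun a => bddB' _ fun γ => hμ0 _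
    have bν : ∀ a : S, BddAbove (Set.range fun γ : Γ => ν' (mkl a γ)) :=
      fun a => bddA' _ fun γ => hν1 _
    refine ⟨⟨?_, ?_, ?_, ?_, ?_⟩, ?_, ?_⟩
    · intro x; exact le_ciInf fun γ => hμ0 _
    · intro x; exact le_trans (hν0 _) (le_ciSup (bν x) (Classical.arbitrary Γ))
    · intro x
      simp only
      have h1 : (⨆ γ : Γ, ν' (mkl x γ)) ≤ 1 - ⨅ γ : Γ, μ' (mkl x γ) := by
        apply ciSup_le
        intro γ
        have h2 := ciInf_le (bμ x) γ
        have h3 := hsum (mkl x γ)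
        linarith
      linarith
    · intro x γ y
      apply le_ciInf
      intro β
      have heq : mkl (m x γ y) β = mkl x γ * mkl y β := (hmul x γ y β).symm
      rw [heq]
      apply max_le
      · exact le_trans (ciInf_le (bμ x) γ)
          (le_trans (le_max_left _ (μ' (mkl y β))) (hmax _ _))
      · exact le_trans (ciInf_le (bμ y) β)
          (le_trans (le_max_right (μ' (mkl x γ)) _) (hmax _ _))
    · intro x γ y
      apply ciSup_le
      intro β
      have heq : mkl (m x γ y) β = mkl x γ * mkl y β := (hmul x γ y β).symm
      rw [heq]
      apply le_min
      · exact le_trans (le_trans (hmin _ _) (min_le_left _ _)) (le_ciSup (bν x) γ)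
      · exact le_trans (le_trans (hmin _ _) (min_le_right _ _)) (le_ciSup (bν y) β)
    · intro a α
      have key : mkl (m a α e) δ = mkl a α := by
        rw [hmkeq]
        exact ⟨fun t => by rw [hm, hlu], fun γ => by rw [hgm, hluΓ]⟩
      apply le_antisymm
      · have bouter : BddBelow (Set.range fun s : S => ⨅ γ : Γ, μ' (mkl (m a α s) γ)) :=
          bddB' _ fun s => le_ciInf fun γ => hμ0 _
        refine le_trans (ciInf_le bouter e) ?_
        refine le_trans (ciInf_le (bμ (m a α e)) δ) ?_
        rw [key]
      · apply le_ciInf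
        intro s
        apply le_ciInf
        intro γ
        rw [show mkl (m a α s) γ = mkl a α * mkl s γ from (hmul a α s γ).symm]
        exact le_trans (le_max_left _ (μ' (mkl s γ))) (hmax _ _)
    · intro a α
      have key : mkl (m a α e) δ = mkl a α := by
        rw [hmkeq]
        exact ⟨fun t => by rw [hm, hlu], fun γ => by rw [hgm, hluΓ]⟩
      apply le_antisymm
      · apply ciSup_le
        intro s
        apply ciSup_le
        intro γ
        rw [show mkl (m a α s) γ = mkl a α * mkl s γ from (hmul a α s γ).symm]
        exact le_trans (hmin _ _) (min_le_left _ _)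
      · have bouter : BddAbove (Set.range fun s : S => ⨆ γ : Γ, ν' (mkl (m a α s) γ)) :=
          bddA' _ fun s => ciSup_le fun γ => hν1 _
        refine le_trans ?_ (le_ciSup bouter e)
        refine le_trans ?_ (le_ciSup (bν (m a α e)) δ)
        rw [key]
  · -- (iii)
    intro μ₁ ν₁ μ₂ ν₂ h1 h2 hμle hνle
    obtain ⟨hμ10, hν10, hsum1, _, _⟩ := h1
    obtain ⟨hμ20, hν20, hsum2, _, _⟩ := h2
    have hν11 : ∀ x, ν₁ x ≤ 1 := fun x => by linarith [hsum1 x, hμ10 x]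
    constructor
    · intro a α
      exact ciInf_mono (bddB' _ fun s => hμ10 _) fun s => hμle _
    · intro a α
      exact ciSup_mono (bddA' _ fun s => hν11 _) fun s => hνle _
end
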